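/- Let G be a triangle-free graph on n vertices. Then for every λ > 0, P_G(λ) ≥ max{ (1+λ)^D, exp( (n/(2D))·W(D·log(1+λ))² ) }, where D is the maximum degree of G (assume D ≥ 1). -/

import Mathlib

open Finset MeasureTheory Real
open scoped Classical

noncomputable def indSets {V : Type*} [Fintype V] (G : SimpleGraph V) : Finset (Finset V) :=
  Finset.univ.filter (fun s => ∀ u ∈ s, ∀ v ∈ s, ¬ G.Adj u v)

/-- The independence polynomial (hard-core partition function). -/
noncomputable def indPoly {V : Type*} [Fintype V] (G : SimpleGraph V) (x : ℝ) : ℝ :=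
  ∑ s ∈ indSets G, x ^ s.card

/-- Expected size of an independent set from the hard-core model at fugacity x. -/
noncomputable def avgSize {V : Type*} [Fintype V] (G : SimpleGraph V) (x : ℝ) : ℝ :=
  x * deriv (indPoly G) x / indPoly G x

/-!
In a triangle-free graph every subset of a neighbourhood is independent, which gives `(1 + l) ^ D`.

For the other bound write `Z = indPoly G` and `n = |V|`. Fix a vertex `v` and split an independent
set into its part `J` outside the closed neighbourhood of `v` and the rest; as `G` is
triangle-free, the rest is either `{v}` or any subset of the `F` neighbours of `v` with no
neighbour in `J`. In each such fibre, `(x - X) e^X ≤ e^x` at `X = F log (1 + t)` bounds the total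
weight by the weights of the sets containing `v` and of their vertices in `N(v)`. Summing over `v`,
each vertex of a set is counted at most `D` times through neighbourhoods, so for every `x`
`n x Z(t) ≤ (1 + t) (e^x + D log (1 + t)) Z'(t)`.
Choosing `x = y` with `D log (1 + t) = y e^y`, i.e. `t = fugacity D y`, this says exactly that
`y ↦ log Z(fugacity D y) - n y² / (2D)` is nondecreasing; it vanishes at `0`, and
`fugacity D w = l`.
-/

section Powerset

variable {α R : Type*} [CommRing R]

lemma sum_powerset_pow_card (u : Finset α) (t : R) :
    ∑ K ∈ u.powerset, t ^ #K = (1 + t) ^ #u := by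
  simpa [add_comm] using sum_pow_mul_eq_add_pow t 1 u

lemma one_add_mul_sum_powerset_card_mul_pow (u : Finset α) (t : R) :
    (1 + t) * ∑ K ∈ u.powerset, (#K : R) * t ^ #K = #u * t * (1 + t) ^ #u := by
  induction u using Finset.induction_on with
  | empty => simp
  | insert a s ha ih =>
    have hins : ∀ K ∈ s.powerset,
        (#(insert a K) : R) * t ^ #(insert a K) = t * (#K * t ^ #K) + t * t ^ #K := by
      intro K hK
      rw [card_insert_of_notMem fun h => ha (mem_powerset.1 hK h)]
      push_cast
      ring
    rw [sum_powerset_insert ha, sum_congr rfl hins, sum_add_distrib, ← mul_sum, ← mul_sum,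
      sum_powerset_pow_card, card_insert_of_notMem ha]
    push_cast
    linear_combination (1 + t) * ih

end Powerset

section IndependentSets

variable {V : Type*} [Fintype V] (G : SimpleGraph V)

lemma mem_indSets {s : Finset V} : s ∈ indSets G ↔ ∀ u ∈ s, ∀ v ∈ s, ¬ G.Adj u v := by
  simp [indSets]

lemma empty_mem_indSets : ∅ ∈ indSets G := by
  simp [mem_indSets]

lemma one_le_indPoly {t : ℝ} (ht : 0 ≤ t) : 1 ≤ indPoly G t := by
  simpa [indPoly] using single_le_sum (f := fun s : Finset V => t ^ #s) (fun s _ => pow_nonneg ht _)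
    (empty_mem_indSets G)

lemma indPoly_zero : indPoly G 0 = 1 := by
  rw [indPoly, sum_eq_single_of_mem ∅ (empty_mem_indSets G) fun s _ hs => ?_]
  · simp
  · simp [nonempty_iff_ne_empty.2 hs |>.card_pos.ne']

lemma hasDerivAt_indPoly (t : ℝ) :
    HasDerivAt (indPoly G) (∑ s ∈ indSets G, #s * t ^ (#s - 1)) t :=
  HasDerivAt.fun_sum fun s _ => hasDerivAt_pow #s t

lemma mul_deriv_indPoly (t : ℝ) : t * deriv (indPoly G) t = ∑ s ∈ indSets G, #s * t ^ #s := by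
  rw [(hasDerivAt_indPoly G t).deriv, mul_sum]
  refine sum_congr rfl fun s _ => ?_
  rcases Nat.eq_zero_or_pos #s with hs | hs
  · simp [hs]
  · rw [mul_left_comm, mul_pow_sub_one hs.ne']

end IndependentSets

section TriangleFree

variable {V : Type*} [Fintype V] {G : SimpleGraph V}

lemma mem_indSets_of_subset {s K : Finset V} (hs : s ∈ indSets G) (hK : K ⊆ s) :
    K ∈ indSets G := by
  rw [mem_indSets] at hs ⊢
  exact fun u hu w hw => hs u (hK hu) w (hK hw)

lemma neighborFinset_mem_indSets (htf : G.CliqueFree 3) (v : V) :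
    G.neighborFinset v ∈ indSets G := by
  rw [mem_indSets]
  intro u hu w hw huw
  exact htf {v, u, w} (SimpleGraph.is3Clique_triple_iff.2
    ⟨(G.mem_neighborFinset v u).1 hu, (G.mem_neighborFinset v w).1 hw, huw⟩)

lemma one_add_pow_card_le_indPoly {s : Finset V} (hs : s ∈ indSets G) {t : ℝ} (ht : 0 ≤ t) :
    (1 + t) ^ #s ≤ indPoly G t := by
  rw [← sum_powerset_pow_card]
  exact sum_le_sum_of_subset_of_nonneg (fun K hK => mem_indSets_of_subset hs (mem_powerset.1 hK))
    fun K _ _ => pow_nonneg ht _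

end TriangleFree

section Decomposition

variable {V R : Type*} [Fintype V] [CommSemiring R] {G : SimpleGraph V}

/-- The spatial Markov property of the hard-core model. -/
lemma sum_indSets_pow_mul_eq (M : Finset V) (t : R) (φ : Finset V → R) :
    ∑ s ∈ indSets G, t ^ #s * φ (s ∩ M) =
      ∑ J ∈ (indSets G).filter (Disjoint · M), t ^ #J *
        ∑ K ∈ (indSets G).filter (fun K => K ⊆ M ∧ ∀ j ∈ J, ∀ k ∈ K, ¬ G.Adj j k),
          t ^ #K * φ K := by
  simp_rw [mul_sum]
  rw [sum_sigma']
  refine sum_nbij' (fun s => ⟨s \ M, s ∩ M⟩) (fun p => p.1 ∪ p.2) ?_ ?_ ?_ ?_ ?_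
  · intro s hs
    simp only [mem_sigma, mem_filter, mem_indSets] at hs ⊢
    exact ⟨⟨fun u hu v hv => hs u (mem_sdiff.1 hu).1 v (mem_sdiff.1 hv).1, sdiff_disjoint⟩,
      fun u hu v hv => hs u (mem_inter.1 hu).1 v (mem_inter.1 hv).1, inter_subset_right,
      fun j hj k hk => hs j (mem_sdiff.1 hj).1 k (mem_inter.1 hk).1⟩
  · rintro ⟨J, K⟩ hJK
    simp only [mem_sigma, mem_filter, mem_indSets] at hJK ⊢
    obtain ⟨⟨hJ, -⟩, hK, -, hJK⟩ := hJK
    intro u hu v hv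
    rcases mem_union.1 hu with hu | hu <;> rcases mem_union.1 hv with hv | hv
    exacts [hJ u hu v hv, hJK u hu v hv, fun h => hJK v hv u hu h.symm, hK u hu v hv]
  · intro s _
    exact sdiff_union_inter s M
  · rintro ⟨J, K⟩ hJK
    simp only [mem_sigma, mem_filter] at hJK
    obtain ⟨⟨-, hJM⟩, -, hKM, -⟩ := hJK
    have hout : (J ∪ K) \ M = J := by
      rw [union_sdiff_distrib, hJM.sdiff_eq_left, sdiff_eq_empty_iff_subset.2 hKM, union_empty]
    have hin : (J ∪ K) ∩ M = K := by
      rw [union_inter_distrib_right, disjoint_iff_inter_eq_empty.1 hJM, inter_eq_left.2 hKM,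
        empty_union]
    simp only [hout, hin]
  · intro s _
    simp only
    rw [← mul_assoc, ← pow_add, card_sdiff_add_card_inter]

lemma filter_compatible_closedNbhd_eq (htf : G.CliqueFree 3) {v : V} {J : Finset V}
    (hJ : Disjoint J (G.neighborFinset v)) :
    (indSets G).filter
        (fun K => K ⊆ insert v (G.neighborFinset v) ∧ ∀ j ∈ J, ∀ k ∈ K, ¬ G.Adj j k) =
      insert {v} ((G.neighborFinset v).filter (fun u => ∀ j ∈ J, ¬ G.Adj j u)).powerset := by
  ext K
  simp only [mem_filter, mem_insert, mem_powerset]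
  constructor
  · rintro ⟨hK, hKM, hKJ⟩
    rw [mem_indSets] at hK
    by_cases hv : v ∈ K
    · refine Or.inl (eq_singleton_iff_unique_mem.2 ⟨hv, fun k hk => ?_⟩)
      by_contra hkv
      exact hK v hv k hk ((G.mem_neighborFinset v k).1
        ((mem_insert.1 (hKM hk)).resolve_left hkv))
    · refine Or.inr fun k hk => ?_
      exact mem_filter.2 ⟨(mem_insert.1 (hKM hk)).resolve_left (ne_of_mem_of_not_mem hk hv),
        fun j hj => hKJ j hj k hk⟩
  · rintro (rfl | hKU)
    · refine ⟨by simp [mem_indSets], singleton_subset_iff.2 (mem_insert_self v _),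
        fun j hj k hk hjk => ?_⟩
      rw [mem_singleton.1 hk] at hjk
      exact disjoint_left.1 hJ hj ((G.mem_neighborFinset v j).2 hjk.symm)
    · have hKN : K ⊆ G.neighborFinset v := hKU.trans (filter_subset _ _)
      exact ⟨mem_indSets_of_subset (neighborFinset_mem_indSets htf v) hKN,
        hKN.trans (subset_insert _ _), fun j hj k hk => (mem_filter.1 (hKU hk)).2 j hj⟩

end Decomposition

lemma sub_mul_exp_le_exp (x X : ℝ) : (x - X) * exp X ≤ exp x :=
  calc (x - X) * exp X ≤ exp (x - X - 1) * exp X := by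
        gcongr
        linarith [add_one_le_exp (x - X - 1)]
    _ = exp (x - 1) := by rw [← exp_add]; ring_nf
    _ ≤ exp x := exp_le_exp.2 (by linarith)

lemma mul_add_exp_le {t : ℝ} (ht : 0 ≤ t) (x X : ℝ) :
    x * (t + exp X) ≤ (1 + t) * exp x + X * exp X := by
  have hx : x * t ≤ exp x * t := mul_le_mul_of_nonneg_right (by linarith [add_one_le_exp x]) ht
  nlinarith [sub_mul_exp_le_exp x X]

lemma mul_add_one_add_pow_le {t : ℝ} (ht : 0 ≤ t) (x : ℝ) (F : ℕ) :
    x * t * (t + (1 + t) ^ F) ≤ t * (1 + t) * exp x + log (1 + t) * (F * t * (1 + t) ^ F) := by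
  have hpow : (1 + t) ^ F = exp (F * log (1 + t)) := by
    rw [exp_nat_mul, exp_log (by linarith)]
  have h := mul_le_mul_of_nonneg_left (mul_add_exp_le ht x (F * log (1 + t))) ht
  rw [hpow]
  linarith

section Occupancy

variable {V : Type*} [Fintype V] {G : SimpleGraph V}

lemma sum_compatible_pow_mul_le (htf : G.CliqueFree 3) {v : V} {J : Finset V}
    (hJ : Disjoint J (G.neighborFinset v)) {t : ℝ} (ht : 0 ≤ t) (x : ℝ) :
    ∑ K ∈ (indSets G).filter
        (fun K => K ⊆ insert v (G.neighborFinset v) ∧ ∀ j ∈ J, ∀ k ∈ K, ¬ G.Adj j k),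
        t ^ #K * (x * t) ≤
      ∑ K ∈ (indSets G).filter
        (fun K => K ⊆ insert v (G.neighborFinset v) ∧ ∀ j ∈ J, ∀ k ∈ K, ¬ G.Adj j k),
        t ^ #K * ((1 + t) *
          (exp x * (if v ∈ K then 1 else 0) + log (1 + t) * #(K ∩ G.neighborFinset v))) := by
  set U := (G.neighborFinset v).filter (fun u => ∀ j ∈ J, ¬ G.Adj j u)
  have hUN : U ⊆ G.neighborFinset v := filter_subset _ _
  have hvU : {v} ∉ U.powerset := fun h =>
    G.notMem_neighborFinset_self v (hUN (mem_powerset.1 h (mem_singleton_self v)))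
  have hU : ∀ K ∈ U.powerset, t ^ #K * ((1 + t) *
      (exp x * (if v ∈ K then 1 else 0) + log (1 + t) * #(K ∩ G.neighborFinset v))) =
        log (1 + t) * ((1 + t) * (#K * t ^ #K)) := by
    intro K hK
    have hKN := (mem_powerset.1 hK).trans hUN
    have hvK : v ∉ K := fun h => G.notMem_neighborFinset_self v (hKN h)
    simp only [hvK, if_false, inter_eq_left.2 hKN]
    ring
  rw [filter_compatible_closedNbhd_eq htf hJ, sum_insert hvU, sum_insert hvU, ← sum_mul,
    sum_powerset_pow_card, sum_congr rfl hU, ← mul_sum, ← mul_sum,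
    one_add_mul_sum_powerset_card_mul_pow]
  simp only [mem_singleton_self, if_true, card_singleton, pow_one,
    singleton_inter_of_notMem (G.notMem_neighborFinset_self v), card_empty, Nat.cast_zero]
  linarith [mul_add_one_add_pow_le ht x #U]

lemma mul_mul_indPoly_le_sum (htf : G.CliqueFree 3) (v : V) {t : ℝ} (ht : 0 ≤ t) (x : ℝ) :
    x * t * indPoly G t ≤ ∑ s ∈ indSets G, t ^ #s * ((1 + t) *
      (exp x * (if v ∈ s then 1 else 0) + log (1 + t) * #(s ∩ G.neighborFinset v))) := by
  set M := insert v (G.neighborFinset v)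
  set φ : Finset V → ℝ := fun K =>
    (1 + t) * (exp x * (if v ∈ K then 1 else 0) + log (1 + t) * #(K ∩ G.neighborFinset v))
  have hφ : ∀ s, φ (s ∩ M) = φ s := by
    intro s
    simp only [φ, M, mem_inter, mem_insert_self, and_true, inter_assoc,
      inter_eq_right.2 (subset_insert v (G.neighborFinset v))]
  calc x * t * indPoly G t = ∑ s ∈ indSets G, t ^ #s * (x * t) := by
        rw [indPoly, mul_sum]
        exact sum_congr rfl fun _ _ => mul_comm _ _
    _ = _ := sum_indSets_pow_mul_eq M t fun _ => x * t
    _ ≤ _ := sum_le_sum fun J hJ => mul_le_mul_of_nonneg_left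
        (sum_compatible_pow_mul_le htf ((mem_filter.1 hJ).2.mono_right (subset_insert _ _)) ht x)
        (pow_nonneg ht _)
    _ = ∑ s ∈ indSets G, t ^ #s * φ (s ∩ M) := (sum_indSets_pow_mul_eq M t φ).symm
    _ = _ := by simp only [hφ]; rfl

lemma sum_card_inter_neighborFinset (s : Finset V) :
    ∑ v, #(s ∩ G.neighborFinset v) = ∑ u ∈ s, G.degree u := by
  have h := sum_card_bipartiteAbove_eq_sum_card_bipartiteBelow (s := univ) (t := s) (r := G.Adj)
  convert h using 2 with v _ u
  · congr 1
    ext u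
    simp [bipartiteAbove]
  · rw [← G.card_neighborFinset_eq_degree]
    congr 1
    ext w
    simp [bipartiteBelow, G.adj_comm]

lemma card_mul_indPoly_le (htf : G.CliqueFree 3) {D : ℕ} (hmax : ∀ v, G.degree v ≤ D)
    {t : ℝ} (ht : 0 ≤ t) (x : ℝ) :
    Fintype.card V * x * t * indPoly G t ≤
      (1 + t) * (exp x + D * log (1 + t)) * ∑ s ∈ indSets G, #s * t ^ #s := by
  have hdeg : ∀ s : Finset V, ∑ v, (#(s ∩ G.neighborFinset v) : ℝ) ≤ D * #s := by
    intro s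
    rw [← Nat.cast_sum, sum_card_inter_neighborFinset, ← Nat.cast_mul, mul_comm]
    exact_mod_cast sum_le_card_nsmul s _ D fun u _ => hmax u
  have hL : 0 ≤ log (1 + t) := log_nonneg (by linarith)
  calc Fintype.card V * x * t * indPoly G t = ∑ _v : V, x * t * indPoly G t := by
        rw [sum_const, card_univ, nsmul_eq_mul]; ring
    _ ≤ ∑ v, ∑ s ∈ indSets G, t ^ #s * ((1 + t) * (exp x * (if v ∈ s then 1 else 0) +
          log (1 + t) * #(s ∩ G.neighborFinset v))) :=
        sum_le_sum fun v _ => mul_mul_indPoly_le_sum htf v ht x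
    _ = ∑ s ∈ indSets G, t ^ #s * ((1 + t) * (exp x * #s +
          log (1 + t) * ∑ v, (#(s ∩ G.neighborFinset v) : ℝ))) := by
        rw [sum_comm]
        refine sum_congr rfl fun s _ => ?_
        simp only [← mul_sum, sum_add_distrib, sum_boole, filter_mem_eq_inter, univ_inter]
    _ ≤ ∑ s ∈ indSets G, t ^ #s * ((1 + t) * (exp x * #s + log (1 + t) * (D * #s))) := by
        gcongr with s
        exact hdeg s
    _ = _ := by
        rw [mul_sum]
        exact sum_congr rfl fun s _ => by ring

end Occupancy

section Fugacity

/-- The fugacity `t` with `D * log (1 + t) = y * exp y`, i.e. `y = W (D * log (1 + t))`. -/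
noncomputable def fugacity (D : ℕ) (y : ℝ) : ℝ := exp (y * exp y / D) - 1

variable {D : ℕ}

lemma hasDerivAt_fugacity (y : ℝ) :
    HasDerivAt (fugacity D) ((1 + fugacity D y) * ((1 + y) * exp y) / D) y := by
  refine ((((hasDerivAt_id' y).fun_mul (hasDerivAt_exp y)).div_const (D : ℝ)).exp.sub_const
    1).congr_deriv ?_
  simp only [fugacity]
  ring

lemma fugacity_zero : fugacity D 0 = 0 := by
  simp [fugacity]

lemma fugacity_nonneg {y : ℝ} (hy : 0 ≤ y) : 0 ≤ fugacity D y := by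
  rw [fugacity, sub_nonneg]
  exact one_le_exp (by positivity)

lemma fugacity_pos (hD : 0 < D) {y : ℝ} (hy : 0 < y) : 0 < fugacity D y := by
  rw [fugacity, sub_pos]
  exact one_lt_exp_iff.2 (by positivity)

lemma fugacity_eq (hD : 0 < D) {y t : ℝ} (ht : -1 < t) (h : y * exp y = D * log (1 + t)) :
    fugacity D y = t := by
  rw [fugacity, h, mul_div_cancel_left₀ _ (by positivity), exp_log (by linarith)]
  ring

lemma natCast_mul_log_one_add_fugacity (hD : 0 < D) (y : ℝ) :
    D * log (1 + fugacity D y) = y * exp y := by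
  rw [fugacity, add_sub_cancel, log_exp, mul_div_cancel₀ _ (by positivity)]

end Fugacity

section Bounds

variable {V : Type*} [Fintype V] {G : SimpleGraph V} {D : ℕ}

lemma card_mul_indPoly_le_deriv (htf : G.CliqueFree 3) (hmax : ∀ v, G.degree v ≤ D)
    {t : ℝ} (ht : 0 < t) (x : ℝ) :
    Fintype.card V * x * indPoly G t ≤
      (1 + t) * (exp x + D * log (1 + t)) * deriv (indPoly G) t := by
  have h := card_mul_indPoly_le htf hmax ht.le x
  rw [← mul_deriv_indPoly] at h
  refine le_of_mul_le_mul_left ?_ ht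
  linarith

lemma monotoneOn_log_indPoly_fugacity_sub (htf : G.CliqueFree 3) (hD : 0 < D)
    (hmax : ∀ v, G.degree v ≤ D) :
    MonotoneOn (fun y => log (indPoly G (fugacity D y)) - Fintype.card V / (2 * D) * y ^ 2)
      (Set.Ici 0) := by
  have hZ : ∀ y : ℝ, 0 ≤ y → 0 < indPoly G (fugacity D y) := fun y hy =>
    one_pos.trans_le (one_le_indPoly G (fugacity_nonneg hy))
  have hderiv : ∀ y : ℝ, 0 ≤ y → HasDerivAt
      (fun y => log (indPoly G (fugacity D y)) - Fintype.card V / (2 * D) * y ^ 2)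
      (deriv (indPoly G) (fugacity D y) * ((1 + fugacity D y) * ((1 + y) * exp y) / D) /
          indPoly G (fugacity D y) - Fintype.card V / (2 * D) * (2 * y)) y := by
    intro y hy
    have hsq : HasDerivAt (fun y : ℝ => y ^ 2) (2 * y) y := by
      simpa using hasDerivAt_pow 2 y
    exact ((((hasDerivAt_indPoly G _).differentiableAt.hasDerivAt).comp y
      (hasDerivAt_fugacity y)).log (hZ y hy).ne').sub (hsq.const_mul _)
  refine monotoneOn_of_hasDerivWithinAt_nonneg (convex_Ici 0)
    (fun y hy => (hderiv y hy).continuousAt.continuousWithinAt)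
    (fun y hy => (hderiv y (interior_subset hy)).hasDerivWithinAt) fun y hy => ?_
  rw [interior_Ici] at hy
  have hτ := fugacity_pos hD hy
  have hocc := card_mul_indPoly_le_deriv htf hmax hτ y
  rw [natCast_mul_log_one_add_fugacity hD] at hocc
  rw [sub_nonneg]
  calc Fintype.card V / (2 * D) * (2 * y)
      = Fintype.card V * y * indPoly G (fugacity D y) / (D * indPoly G (fugacity D y)) := by
        field_simp [(hZ y hy.le).ne']
    _ ≤ (1 + fugacity D y) * (exp y + y * exp y) * deriv (indPoly G) (fugacity D y) /
          (D * indPoly G (fugacity D y)) := by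
        gcongr
        exact mul_nonneg D.cast_nonneg (hZ y hy.le).le
    _ = _ := by field_simp

lemma card_div_mul_sq_le_log_indPoly_fugacity (htf : G.CliqueFree 3) (hD : 0 < D)
    (hmax : ∀ v, G.degree v ≤ D) {y : ℝ} (hy : 0 ≤ y) :
    Fintype.card V / (2 * D) * y ^ 2 ≤ log (indPoly G (fugacity D y)) := by
  have h := monotoneOn_log_indPoly_fugacity_sub htf hD hmax Set.self_mem_Ici hy hy
  simp only [fugacity_zero, indPoly_zero, log_one] at h
  linarith

end Bounds

theorem stmt14_general {V : Type*} [Fintype V] (G : SimpleGraph V) (D : ℕ)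
    (hD1 : 1 ≤ D) (hmax : ∀ v, G.degree v ≤ D) (hex : ∃ v, G.degree v = D)
    (htf : G.CliqueFree 3) (l w : ℝ) (hl : 0 < l) (hw : 0 < w)
    (hWe : w * Real.exp w = D * Real.log (1 + l)) :
    max ((1 + l) ^ D)
        (Real.exp (((Fintype.card V : ℝ) / (2 * D)) * w ^ 2)) ≤ indPoly G l := by
  obtain ⟨v, hv⟩ := hex
  refine max_le ?_ ?_
  · have h := one_add_pow_card_le_indPoly (neighborFinset_mem_indSets htf v) hl.le
    rwa [G.card_neighborFinset_eq_degree, hv] at h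
  · rw [← le_log_iff_exp_le (one_pos.trans_le (one_le_indPoly G hl.le)),
      ← fugacity_eq hD1 (by linarith) hWe]
    exact card_div_mul_sq_le_log_indPoly_fugacity htf hD1 hmax hw.le

theorem stmt14 {V : Type*} [Fintype V] [Nonempty V] (G : SimpleGraph V) (D : ℕ)
    (hD1 : 1 ≤ D) (hmax : ∀ v, G.degree v ≤ D) (hex : ∃ v, G.degree v = D)
    (htf : G.CliqueFree 3) (l w : ℝ) (hl : 0 < l) (hw : 0 < w)
    (hWe : w * Real.exp w = D * Real.log (1 + l)) :
    max ((1 + l) ^ D)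
        (Real.exp (((Fintype.card V : ℝ) / (2 * D)) * w ^ 2)) ≤ indPoly G l :=
  stmt14_general G D hD1 hmax hex htf l w hl hw hWe
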